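/- Let (a_k)_{k≥0} be a sequence of nonnegative reals with a_0 ≤ A, and suppose there are constants C ≥ 1, δ > 0 such that a_{k+1} ≤ (C·δ·2^k)^{1/2^k}·a_k for all k, where a_k = ‖e^{δu}‖_{L^{2^k}}. Then sup_k a_k ≤ C'·a_0 for a constant C' depending only on C and δ. -/
import Mathlib


/-- Moser iteration: if `b (k+1) ≤ (K·2^k)^(1/2^k) · b k` with `K ≥ 1` and all
`b k ≥ 0`, then `sup_k b k ≤ C' · b 0` for a constant `C'` depending only on `K`. -/
theorem moser_iteration (K : ℝ) (hK : 1 ≤ K) :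
    ∃ C' > 0, ∀ b : ℕ → ℝ, (∀ k, 0 ≤ b k) →
      (∀ k : ℕ, b (k + 1) ≤ (K * 2 ^ k) ^ ((1 : ℝ) / 2 ^ k) * b k) →
      ∀ k, b k ≤ C' * b 0 := by
  have h2K : (1:ℝ) < 2 * K := by linarith
  set L := Real.log (2 * K) with hLdef
  have hL0 : 0 < L := Real.log_pos h2K
  refine ⟨Real.exp (4 * L), Real.exp_pos _, ?_⟩
  intro b hb hrec
  have hS : ∀ k : ℕ, ∑ j ∈ Finset.range k, ((j:ℝ)+1) / 2 ^ j
      = 4 - (2*(k:ℝ)+4)/2^k := by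
    intro k
    induction k with
    | zero => simp
    | succ n ih =>
      rw [Finset.sum_range_succ, ih]
      have h2 : (0:ℝ) < 2 ^ n := by positivity
      push_cast
      field_simp
      ring
  have key : ∀ k, b k ≤ Real.exp (L * ∑ j ∈ Finset.range k, ((j:ℝ)+1)/2^j) * b 0 := by
    intro k
    induction k with
    | zero => simp
    | succ n ih =>
      have h2n : (0:ℝ) < 2 ^ n := by positivity
      have h1 : (K * 2 ^ n) ^ ((1:ℝ) / 2 ^ n) ≤ Real.exp (L * (((n:ℝ)+1)/2^n)) := by
        have hpos : (0:ℝ) < K * 2 ^ n := by positivity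
        rw [Real.rpow_def_of_pos hpos]
        apply Real.exp_le_exp.2
        have hlog : Real.log (K * 2 ^ n) ≤ ((n:ℝ)+1) * L := by
          rw [Real.log_mul (by linarith) (by positivity), Real.log_pow]
          have hk1 : Real.log K ≤ L := Real.log_le_log (by linarith) (by linarith)
          have hk2 : Real.log 2 ≤ L := Real.log_le_log (by norm_num) (by linarith)
          have hK0 : 0 ≤ Real.log K := Real.log_nonneg hK
          have hn0 : (0:ℝ) ≤ (n:ℝ) := Nat.cast_nonneg n
          have h20 : (0:ℝ) ≤ Real.log 2 := Real.log_nonneg (by norm_num)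
          nlinarith
        calc Real.log (K * 2 ^ n) * ((1:ℝ)/2^n)
            ≤ ((n:ℝ)+1) * L * ((1:ℝ)/2^n) :=
              mul_le_mul_of_nonneg_right hlog (by positivity)
          _ = L * (((n:ℝ)+1)/2^n) := by ring
      calc b (n+1) ≤ (K * 2 ^ n) ^ ((1:ℝ) / 2 ^ n) * b n := hrec n
        _ ≤ Real.exp (L * (((n:ℝ)+1)/2^n)) *
            (Real.exp (L * ∑ j ∈ Finset.range n, ((j:ℝ)+1)/2^j) * b 0) := by
            apply mul_le_mul h1 ih (hb n) (le_of_lt (Real.exp_pos _))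
        _ = Real.exp (L * ∑ j ∈ Finset.range (n+1), ((j:ℝ)+1)/2^j) * b 0 := by
            rw [Finset.sum_range_succ, mul_add, Real.exp_add]
            ring
  intro k
  refine (key k).trans ?_
  have hb0 := hb 0
  apply mul_le_mul_of_nonneg_right _ hb0
  apply Real.exp_le_exp.2
  rw [hS k]
  have hpos : (0:ℝ) < (2*(k:ℝ)+4)/2^k := by positivity
  nlinarith
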